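/- Let n ≥ 1, ε > 0, r* > 0, and let g: ℝⁿ → [0,∞) be a bounded measurable function that vanishes almost everywhere outside the closed ball of radius r* centered at the origin and is not almost everywhere zero. Define u(x) = (4πε)^{-n/2} ∫_{ℝⁿ} e^{-|x-y|²/(4ε)} g(y) dy. Then u is positive and differentiable on ℝⁿ, and its gradient satisfies |∇u(x)| ≤ ((|x| + r*)/(2ε)) · u(x) for every x ∈ ℝⁿ. -/

import Mathlib

open MeasureTheory Real Set Filter

noncomputable section

abbrev Euc (n : ℕ) := EuclideanSpace ℝ (Fin n)

noncomputable def heatFlow (n : ℕ) (t : ℝ) (φ : Euc n → ℝ) (x : Euc n) : ℝ :=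
  (4 * Real.pi * t) ^ (-(n : ℝ) / 2) * ∫ y, Real.exp (-‖x - y‖ ^ 2 / (4 * t)) * φ y

/-- `f` is `F`-concave on `Ω` (extended-real valued inequality). -/
def FConcaveOn {V : Type*} [AddCommGroup V] [Module ℝ V]
    (Ω : Set V) (F : ℝ → EReal) (f : V → ℝ) : Prop :=
  ∀ x ∈ Ω, ∀ y ∈ Ω, ∀ τ : ℝ, τ ∈ Set.Ioo (0:ℝ) 1 →
    ((1 - τ : ℝ) : EReal) * F (f x) + ((τ : ℝ) : EReal) * F (f y)
      ≤ F (f ((1 - τ) • x + τ • y))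

/-- `F` is admissible on `[0, a)`. -/
def Admissible (a : EReal) (F : ℝ → EReal) : Prop :=
  0 < a ∧ F 0 = ⊥ ∧
  ContinuousOn F {r : ℝ | 0 < r ∧ (r : EReal) < a} ∧
  (∀ r : ℝ, 0 < r → (r : EReal) < a → F r ≠ ⊥ ∧ F r ≠ ⊤) ∧
  StrictMonoOn F {r : ℝ | 0 ≤ r ∧ (r : EReal) < a}

/-- extended-real logarithm with `log 0 = -∞`. -/
noncomputable def elog (r : ℝ) : EReal := if 0 < r then (Real.log r : EReal) else ⊥

noncomputable def Efun (s : ℝ) : ℝ :=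
  (4 * Real.pi) ^ (-(1:ℝ) / 2) * ∫ s' in Set.Ioi (0:ℝ), Real.exp (-(s - s') ^ 2 / 4)

noncomputable def Hfun : ℝ → ℝ := Function.invFun Efun

noncomputable def Ha (a : EReal) (r : ℝ) : EReal :=
  if 0 < r then
    (if a = ⊤ then (Real.log r : EReal) else (Hfun (r / a.toReal) : EReal))
  else ⊥

/-! Differentiating under the integral sign, `∇ₓ e^{-|x-y|²/(4ε)} = ((y - x)/(2ε)) e^{-|x-y|²/(4ε)}`,
and `|y - x| ≤ |x| + r*` on the support of `g`, so the gradient integrand is dominated pointwise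
by `(|x| + r*)/(2ε)` times the integrand of `u`. Boundedness and compact support of `g` make `g`
integrable, which supplies the domination needed to differentiate under the integral. -/

open Metric

variable {E : Type*} [NormedAddCommGroup E]

def gaussKernel (ε : ℝ) (x y : E) : ℝ := Real.exp (-‖x - y‖ ^ 2 / (4 * ε))

lemma gaussKernel_pos (ε : ℝ) (x y : E) : 0 < gaussKernel ε x y := Real.exp_pos _

lemma gaussKernel_le_one {ε : ℝ} (hε : 0 ≤ ε) (x y : E) : gaussKernel ε x y ≤ 1 := by
  rw [gaussKernel, Real.exp_le_one_iff, neg_div, neg_nonpos]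
  positivity

lemma continuous_gaussKernel (ε : ℝ) (x : E) : Continuous (gaussKernel ε x) := by
  unfold gaussKernel
  fun_prop

section Integral

variable [MeasurableSpace E] [BorelSpace E] {μ : Measure E}

def gaussIntegral (μ : Measure E) (ε : ℝ) (g : E → ℝ) (x : E) : ℝ :=
  ∫ y, gaussKernel ε x y * g y ∂μ

lemma integrable_gaussKernel_mul {ε : ℝ} (hε : 0 ≤ ε) {g : E → ℝ} (hg : Integrable g μ) (x : E) :
    Integrable (fun y => gaussKernel ε x y * g y) μ := by
  refine hg.norm.mono' ((continuous_gaussKernel ε x).aestronglyMeasurable.mul hg.1) ?_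
  refine Eventually.of_forall fun y => ?_
  rw [norm_mul, Real.norm_of_nonneg (gaussKernel_pos ε x y).le]
  exact mul_le_of_le_one_left (norm_nonneg _) (gaussKernel_le_one hε x y)

lemma gaussIntegral_pos {ε : ℝ} (hε : 0 ≤ ε) {g : E → ℝ} (hg : Integrable g μ) (hg0 : 0 ≤ g)
    (hne : ¬ g =ᵐ[μ] 0) (x : E) : 0 < gaussIntegral μ ε g x := by
  have hsupp : (Function.support fun y => gaussKernel ε x y * g y) = Function.support g := by
    ext y
    simp [(gaussKernel_pos ε x y).ne']
  rw [gaussIntegral, integral_pos_iff_support_of_nonneg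
    (fun y => mul_nonneg (gaussKernel_pos ε x y).le (hg0 y)) (integrable_gaussKernel_mul hε hg x),
    hsupp, pos_iff_ne_zero]
  exact hne

end Integral

variable [InnerProductSpace ℝ E]

lemma hasFDerivAt_gaussKernel (ε : ℝ) (x y : E) :
    HasFDerivAt (gaussKernel ε · y) (((2 * ε)⁻¹ * gaussKernel ε x y) • innerSL ℝ (y - x)) x := by
  convert ((((hasFDerivAt_id x).sub_const y).norm_sq).const_mul (-(4 * ε)⁻¹)).exp using 1
  · ext z
    simp only [gaussKernel, id_eq]
    ring_nf
  · ext v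
    simp only [gaussKernel, smul_apply, ContinuousLinearMap.comp_apply,
      ContinuousLinearMap.id_apply, innerSL_apply_apply, inner_sub_left, smul_eq_mul, id_eq]
    ring_nf

def gaussKernelMulFDeriv (ε : ℝ) (g : E → ℝ) (x y : E) : E →L[ℝ] ℝ :=
  ((2 * ε)⁻¹ * gaussKernel ε x y * g y) • innerSL ℝ (y - x)

lemma hasFDerivAt_gaussKernel_mul (ε : ℝ) (g : E → ℝ) (x y : E) :
    HasFDerivAt (gaussKernel ε · y * g y) (gaussKernelMulFDeriv ε g x y) x :=
  ((hasFDerivAt_gaussKernel ε x y).mul_const (g y)).congr_fderiv <| by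
    rw [smul_smul, gaussKernelMulFDeriv, mul_comm (g y)]

lemma norm_gaussKernelMulFDeriv_le {ε r : ℝ} (hε : 0 ≤ ε) {g : E → ℝ} (x : E) {y : E}
    (hy : y ∉ closedBall 0 r → g y = 0) :
    ‖gaussKernelMulFDeriv ε g x y‖ ≤ (‖x‖ + r) / (2 * ε) * (gaussKernel ε x y * ‖g y‖) := by
  by_cases hgy : g y = 0
  · simp [gaussKernelMulFDeriv, hgy]
  have hyr : ‖y‖ ≤ r := mem_closedBall_zero_iff.mp (not_imp_comm.mp hy hgy)
  have hK := gaussKernel_pos ε x y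
  calc ‖gaussKernelMulFDeriv ε g x y‖ = (2 * ε)⁻¹ * gaussKernel ε x y * ‖g y‖ * ‖y - x‖ := by
        rw [gaussKernelMulFDeriv, norm_smul, innerSL_apply_norm, norm_mul, norm_mul,
          Real.norm_of_nonneg (by positivity), Real.norm_of_nonneg hK.le]
    _ ≤ (2 * ε)⁻¹ * gaussKernel ε x y * ‖g y‖ * (‖x‖ + r) := by
        gcongr
        linarith [norm_sub_le y x]
    _ = (‖x‖ + r) / (2 * ε) * (gaussKernel ε x y * ‖g y‖) := by ring

variable [MeasurableSpace E] [BorelSpace E] {μ : Measure E}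

lemma hasFDerivAt_gaussIntegral [SecondCountableTopology E] {ε r : ℝ} (hε : 0 ≤ ε) (hr : 0 ≤ r) {g : E → ℝ}
    (hg : Integrable g μ) (hsupp : ∀ᵐ y ∂μ, y ∉ closedBall 0 r → g y = 0) (x₀ : E) :
    HasFDerivAt (gaussIntegral μ ε g) (∫ y, gaussKernelMulFDeriv ε g x₀ y ∂μ) x₀ := by
  have hmeas : AEStronglyMeasurable (gaussKernelMulFDeriv ε g x₀) μ :=
    (((continuous_gaussKernel ε x₀).aestronglyMeasurable.const_mul _).mul hg.1).smul
      (by fun_prop : Continuous fun y => innerSL ℝ (y - x₀)).aestronglyMeasurable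
  refine hasFDerivAt_integral_of_dominated_of_fderiv_le (ball_mem_nhds x₀ zero_lt_one)
    (Eventually.of_forall fun x => (integrable_gaussKernel_mul hε hg x).1)
    (integrable_gaussKernel_mul hε hg x₀) hmeas
    (bound := fun y => (‖x₀‖ + 1 + r) / (2 * ε) * ‖g y‖) ?_ (hg.norm.const_mul _)
    (Eventually.of_forall fun y x _ => hasFDerivAt_gaussKernel_mul ε g x y)
  filter_upwards [hsupp] with y hy x hx
  have hx : ‖x‖ ≤ ‖x₀‖ + 1 := by
    linarith [norm_le_norm_add_norm_sub' x x₀, mem_ball_iff_norm.mp hx]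
  calc ‖gaussKernelMulFDeriv ε g x y‖ ≤ (‖x‖ + r) / (2 * ε) * (gaussKernel ε x y * ‖g y‖) :=
        norm_gaussKernelMulFDeriv_le hε x hy
    _ ≤ (‖x₀‖ + 1 + r) / (2 * ε) * (1 * ‖g y‖) := by
        have hK := gaussKernel_pos ε x y
        gcongr
        exact gaussKernel_le_one hε x y
    _ = (‖x₀‖ + 1 + r) / (2 * ε) * ‖g y‖ := by rw [one_mul]

lemma norm_integral_gaussKernelMulFDeriv_le {ε r : ℝ} (hε : 0 ≤ ε) {g : E → ℝ} (hg : Integrable g μ)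
    (hg0 : 0 ≤ g) (hsupp : ∀ᵐ y ∂μ, y ∉ closedBall 0 r → g y = 0) (x : E) :
    ‖∫ y, gaussKernelMulFDeriv ε g x y ∂μ‖ ≤ (‖x‖ + r) / (2 * ε) * gaussIntegral μ ε g x := by
  rw [gaussIntegral, ← integral_const_mul]
  refine norm_integral_le_of_norm_le ((integrable_gaussKernel_mul hε hg x).const_mul _) ?_
  filter_upwards [hsupp] with y hy
  simpa only [Real.norm_of_nonneg (hg0 y)] using norm_gaussKernelMulFDeriv_le hε x hy

theorem stmt12_general (n : ℕ) (ε rstar : ℝ) (hε : 0 < ε) (hr : 0 < rstar)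
    (g : Euc n → ℝ) (hgm : Measurable g) (hg0 : ∀ x, 0 ≤ g x) (hgb : ∃ C : ℝ, ∀ x, g x ≤ C)
    (hsupp : ∀ᵐ x ∂(volume : Measure (Euc n)),
      x ∉ Metric.closedBall (0 : Euc n) rstar → g x = 0)
    (hne : ¬ g =ᵐ[(volume : Measure (Euc n))] 0) :
    (∀ x, 0 < heatFlow n ε g x) ∧
    Differentiable ℝ (heatFlow n ε g) ∧
    ∀ x, ‖fderiv ℝ (heatFlow n ε g) x‖ ≤ ((‖x‖ + rstar) / (2 * ε)) * heatFlow n ε g x := by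
  obtain ⟨C, hC⟩ := hgb
  have hg : Integrable g := by
    refine (IntegrableOn.of_bound measure_closedBall_lt_top hgm.aestronglyMeasurable.restrict C
      (ae_of_all _ fun x => ?_)).integrable_of_ae_notMem_eq_zero hsupp
    rw [Real.norm_of_nonneg (hg0 x)]
    exact hC x
  set c := (4 * Real.pi * ε) ^ (-(n : ℝ) / 2)
  have hc : 0 < c := Real.rpow_pos_of_pos (by positivity) _
  have hu : heatFlow n ε g = fun x => c * gaussIntegral volume ε g x := rfl
  have hD : ∀ x, HasFDerivAt (heatFlow n ε g) (c • ∫ y, gaussKernelMulFDeriv ε g x y) x :=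
    fun x => hu ▸ (hasFDerivAt_gaussIntegral hε.le hr.le hg hsupp x).const_mul c
  refine ⟨fun x => mul_pos hc (gaussIntegral_pos hε.le hg hg0 hne x),
    fun x => (hD x).differentiableAt, fun x => ?_⟩
  rw [(hD x).fderiv, norm_smul, Real.norm_of_nonneg hc.le, hu, mul_left_comm]
  exact mul_le_mul_of_nonneg_left (norm_integral_gaussKernelMulFDeriv_le hε.le hg hg0 hsupp x) hc.le

/-- gradient estimate `|∇u| ≤ ((|x|+r*)/(2ε)) u` for the heat evolution `u = e^{εΔ}g`
of a bounded nonnegative `g` supported in the closed ball of radius `r*`. -/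
theorem stmt12 (n : ℕ) (hn : 1 ≤ n) (ε rstar : ℝ) (hε : 0 < ε) (hr : 0 < rstar)
    (g : Euc n → ℝ) (hgm : Measurable g) (hg0 : ∀ x, 0 ≤ g x) (hgb : ∃ C : ℝ, ∀ x, g x ≤ C)
    (hsupp : ∀ᵐ x ∂(volume : Measure (Euc n)),
      x ∉ Metric.closedBall (0 : Euc n) rstar → g x = 0)
    (hne : ¬ g =ᵐ[(volume : Measure (Euc n))] 0) :
    (∀ x, 0 < heatFlow n ε g x) ∧
    Differentiable ℝ (heatFlow n ε g) ∧
    ∀ x, ‖fderiv ℝ (heatFlow n ε g) x‖ ≤ ((‖x‖ + rstar) / (2 * ε)) * heatFlow n ε g x :=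
  stmt12_general n ε rstar hε hr g hgm hg0 hgb hsupp hne
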